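/- For real numbers u > r > 0, (e^u - cosh r - e^{u/2} sqrt(2 cosh u - 2 cosh r)) · (sqrt 2 · sinh(u/2) + sqrt(cosh u - cosh r)) = (cosh r - 1) · (sqrt 2 · cosh(u/2) - sqrt(cosh u - cosh r)). -/
import Mathlib

theorem stmt_6 (u r : ℝ) (hr : 0 < r) (hur : r < u) :
    (Real.exp u - Real.cosh r -
        Real.exp (u / 2) * Real.sqrt (2 * Real.cosh u - 2 * Real.cosh r)) *
      (Real.sqrt 2 * Real.sinh (u / 2) + Real.sqrt (Real.cosh u - Real.cosh r)) =
    (Real.cosh r - 1) *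
      (Real.sqrt 2 * Real.cosh (u / 2) - Real.sqrt (Real.cosh u - Real.cosh r)) := by
  have hcc : Real.cosh r < Real.cosh u := by
    rw [Real.cosh_lt_cosh, abs_of_pos hr, abs_of_pos (hr.trans hur)]
    exact hur
  set c := Real.cosh (u / 2)
  set h := Real.sinh (u / 2)
  set s := Real.sqrt (Real.cosh u - Real.cosh r)
  set t := Real.sqrt 2
  have hs2 : s ^ 2 = Real.cosh u - Real.cosh r := Real.sq_sqrt (by linarith)
  have ht2 : t ^ 2 = 2 := Real.sq_sqrt (by norm_num)
  have hsplit : Real.sqrt (2 * Real.cosh u - 2 * Real.cosh r) = t * s := by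
    rw [show 2 * Real.cosh u - 2 * Real.cosh r = 2 * (Real.cosh u - Real.cosh r) by ring,
      Real.sqrt_mul (by norm_num)]
  have hcu : Real.cosh u = c * c + h * h := by
    rw [show u = u / 2 + u / 2 by ring, Real.cosh_add]
  have hexp2 : Real.exp (u / 2) = c + h := (Real.cosh_add_sinh _).symm
  have hexp : Real.exp u = (c + h) ^ 2 := by
    rw [show u = u / 2 + u / 2 by ring, Real.exp_add, hexp2]; ring
  have h1 : c ^ 2 - h ^ 2 = 1 := Real.cosh_sq_sub_sinh_sq _
  rw [hsplit, hexp, hexp2]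
  have g1 : s ^ 2 - (c ^ 2 + h ^ 2 - Real.cosh r) = 0 := by
    rw [hs2, hcu]; ring
  linear_combination (-t * (h + c)) * g1 + (-(s * h * (h + c))) * ht2 +
    (-(t * c - s)) * h1
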